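/- Let q ∈ ℂ* not be a root of unity, let I ⊆ A_q be a nonzero left ideal and M = A_q/I. Then the rank of M as a module over A = ℂ[z,z⁻¹] (i.e., the dimension of K(A) ⊗_A M over the fraction field K(A)) equals the minimum of deg_σ(w) over nonzero w ∈ I. In particular, rk_A(M) is finite. -/

import Mathlib

open LaurentPolynomial

noncomputable section

/-- The `σ`-degree of an element of the quantum torus `A_q`, presented via its canonical
`ℂ`-basis `z^m σ^n` indexed by `ℤ × ℤ`. -/
def sigmaDeg {D : Type*} [Ring D] [Algebra ℂ D] (B : Module.Basis (ℤ × ℤ) ℂ D) (x : D) : ℤ :=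
  (WithBot.unbotD 0 ((B.repr x).support.image Prod.snd).max) -
    (WithTop.untopD 0 ((B.repr x).support.image Prod.snd).min)

/-- The canonical embedding of `A = ℂ[z,z⁻¹]` into the quantum torus, `g(z) ↦ g(Z)`. -/
def embA {D : Type*} [Ring D] [Algebra ℂ D] (zd : Dˣ) (g : LaurentPolynomial ℂ) : D :=
  Finsupp.sum g.coeff fun n a => a • ((zd ^ n : Dˣ) : D)

/-- A family of elements of `M = A_q/I` is linearly independent over `A = ℂ[z,z⁻¹]`
(acting through the embedding `A → A_q`). -/
def AIndep {D : Type*} [Ring D] [Algebra ℂ D] (zd : Dˣ) (I : Submodule D D)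
    {k : ℕ} (v : Fin k → D ⧸ I) : Prop :=
  ∀ g : Fin k → LaurentPolynomial ℂ, (∑ i, embA zd (g i) • v i) = 0 → ∀ i, g i = 0

/-!
Let `w ∈ I` be nonzero of minimal `σ`-degree `r`, with `σ`-support `[m, M]`, so `M - m = r`.
A nontrivial `A`-relation among the classes of `σ^m, …, σ^(m+r-1)` would be a nonzero element
of `I` of `σ`-degree `< r`, so these `r` classes are independent. Conversely, since
`σ^b g(z) = g(q^b z) σ^b`, the element `σ^b w ∈ I` expresses a nonzero `A`-multiple of
`σ^(b+M)` (or of `σ^(b+m)`) through the `σ^(b+i)` with `m ≤ i ≤ M` on the other side; by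
induction every `σ^j`, hence every element of `A_q/I`, is `A`-torsion modulo the span `N` of the
classes of `σ^m, …, σ^(M-1)`. Rank–nullity over the domain `A` then gives `rk_A(A_q/I) ≤ r`.
-/

namespace LaurentPolynomial
variable {R S : Type*} [CommSemiring R] [Semiring S] [Algebra R S]

def evalUnit (u : Sˣ) : R[T;T⁻¹] →ₐ[R] S :=
  AddMonoidAlgebra.lift R S ℤ ((Units.coeHom S).comp (zpowersHom Sˣ u))

lemma evalUnit_eq_smeval (u : Sˣ) (f : R[T;T⁻¹]) : evalUnit u f = f.smeval u :=
  AddMonoidAlgebra.lift_apply _ f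

@[simp] lemma evalUnit_T (u : Sˣ) (n : ℤ) : evalUnit u (T n : R[T;T⁻¹]) = ↑(u ^ n) := by
  rw [evalUnit_eq_smeval, smeval_T_pow]

@[simp] lemma evalUnit_C (u : Sˣ) (r : R) : evalUnit u (C r) = algebraMap R S r := by
  rw [C_eq_algebraMap, AlgHom.commutes]

lemma algHom_ext {φ ψ : R[T;T⁻¹] →ₐ[R] S} (h : φ (T 1) = ψ (T 1)) : φ = ψ :=
  (AddMonoidAlgebra.lift R S ℤ).symm.injective (MonoidHom.ext_mint h)

/-- The substitution `T ↦ c T`. -/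
def twist (c : Rˣ) : R[T;T⁻¹] →ₐ[R] R[T;T⁻¹] :=
  evalUnit (Units.map (C : R →+* R[T;T⁻¹]).toMonoidHom c * (isUnit_T 1).unit)

@[simp] lemma twist_T_one (c : Rˣ) : twist c (T 1) = C (c : R) * T 1 := by
  simp [twist]

lemma twist_inv_twist (c : Rˣ) (f : R[T;T⁻¹]) : twist c⁻¹ (twist c f) = f := by
  have : (twist c⁻¹).comp (twist c) = AlgHom.id R R[T;T⁻¹] := algHom_ext <| by
    rw [AlgHom.comp_apply, twist_T_one, map_mul, C_eq_algebraMap, AlgHom.commutes, twist_T_one,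
      ← mul_assoc, ← C_eq_algebraMap, ← map_mul, Units.mul_inv, map_one, one_mul, AlgHom.id_apply]
  exact congr($this f)

lemma twist_injective (c : Rˣ) : Function.Injective (twist c) :=
  Function.LeftInverse.injective (twist_inv_twist c)

end LaurentPolynomial

section TorsionRank
variable {R M : Type*} [CommRing R] [IsDomain R] [AddCommGroup M] [Module R M]

lemma Submodule.mem_torsion_of_smul_mem_torsion {u : R} (hu : u ≠ 0) {x : M}
    (h : u • x ∈ torsion R M) : x ∈ torsion R M := by
  obtain ⟨a, ha⟩ := (mem_torsion_iff _).mp h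
  exact (mem_torsion_iff _).mpr ⟨a * ⟨u, mem_nonZeroDivisors_of_ne_zero hu⟩, by
    rwa [Submonoid.smul_def, Submonoid.coe_mul, mul_smul]⟩

lemma rank_le_card_of_isTorsion_quotient_span {ι : Type*} (e : ι → M) (s : Finset ι)
    (h : Module.IsTorsion R (M ⧸ Submodule.span R (e '' s))) :
    Module.rank R M ≤ s.card := by
  rw [← rank_quotient_add_rank_of_isDomain (Submodule.span R (e '' s)), h.rank_eq_zero, zero_add]
  exact (rank_span_le _).trans
    (by simpa using Cardinal.mk_image_le_lift (f := e) (s := (s : Set ι)))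

end TorsionRank

namespace QuantumTorus

variable {D : Type*} [Ring D] [Algebra ℂ D] {Q : ℂˣ} {zd σd : Dˣ}

lemma embA_eq_evalUnit (zd : Dˣ) (g : ℂ[T;T⁻¹]) : embA zd g = evalUnit zd g :=
  (evalUnit_eq_smeval zd g).symm

lemma zpow_mul_eq_smul_mul_zpow (hrel : (σd : D) * zd = (Q : ℂ) • (zd * σd : D)) (b : ℤ) :
    ((σd ^ b : Dˣ) : D) * zd = ((Q ^ b : ℂˣ) : ℂ) • (zd * (σd ^ b : Dˣ) : D) := by
  set Qd : Dˣ := Units.map (algebraMap ℂ D : ℂ →* D) Q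
  have hQd (n : ℤ) : ((Qd ^ n : Dˣ) : D) = algebraMap ℂ D ((Q ^ n : ℂˣ) : ℂ) := by
    rw [← map_zpow]; rfl
  have hcomm : Commute Qd σd := Units.ext (Algebra.commutes _ _)
  have hsemi : SemiconjBy (zd : D) ↑(Qd * σd) ↑σd := by
    rw [SemiconjBy, hrel, Units.val_mul, ← mul_assoc, Units.coe_map, MonoidHom.coe_coe,
      ← Algebra.commutes, mul_assoc, Algebra.smul_def]
  have := hsemi.units_zpow_right b
  rw [SemiconjBy, hcomm.mul_zpow, Units.val_mul, hQd] at this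
  rw [← this, ← mul_assoc, ← Algebra.commutes, mul_assoc, Algebra.smul_def]

lemma zpow_mul_evalUnit (hrel : (σd : D) * zd = (Q : ℂ) • (zd * σd : D)) (b : ℤ)
    (g : ℂ[T;T⁻¹]) :
    ((σd ^ b : Dˣ) : D) * evalUnit zd g = evalUnit zd (twist (Q ^ b) g) * (σd ^ b : Dˣ) := by
  have key : (MulSemiringAction.toAlgHom ℂ D (ConjAct.toConjAct (σd ^ b))).comp (evalUnit zd)
      = (evalUnit zd).comp (twist (Q ^ b)) := algHom_ext <| by
    simp [ConjAct.units_smul_def, zpow_mul_eq_smul_mul_zpow hrel, Algebra.smul_def, mul_assoc]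
  have := congr($key g)
  simp only [AlgHom.comp_apply, MulSemiringAction.toAlgHom_apply, ConjAct.units_smul_def,
    ConjAct.ofConjAct_toConjAct] at this
  rw [← this, Units.inv_mul_cancel_right]

section Coordinates

variable (B : Module.Basis (ℤ × ℤ) ℂ D)

/-- The coefficient of `σ^j` in `x = ∑ⱼ gⱼ(z) σ^j`, read off the basis `B (p, j) = z^p σ^j`. -/
def sigmaCoeff (j : ℤ) : D →ₗ[ℂ] ℂ[T;T⁻¹] :=
  (AddMonoidAlgebra.coeffLinearEquiv ℂ).symm.toLinearMap ∘ₗ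
    Finsupp.lcomapDomain (·, j) (fun _ _ h => (Prod.ext_iff.mp h).1) ∘ₗ B.repr.toLinearMap

@[simp] lemma coeff_sigmaCoeff (j : ℤ) (x : D) (p : ℤ) :
    (sigmaCoeff B j x).coeff p = B.repr x (p, j) := rfl

def sigmaSupport (x : D) : Finset ℤ := (B.repr x).support.image Prod.snd

lemma mem_sigmaSupport {x : D} {j : ℤ} : j ∈ sigmaSupport B x ↔ sigmaCoeff B j x ≠ 0 := by
  simp [sigmaSupport, LaurentPolynomial.ext_iff]

lemma ext_sigmaCoeff {x y : D} (h : ∀ j, sigmaCoeff B j x = sigmaCoeff B j y) : x = y :=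
  B.repr.injective <| Finsupp.ext fun p => by simpa using congr(($(h p.2)).coeff p.1)

lemma sigmaDeg_eq {x : D} (hx : (sigmaSupport B x).Nonempty) :
    sigmaDeg B x = (sigmaSupport B x).max' hx - (sigmaSupport B x).min' hx := by
  rw [sigmaDeg, ← sigmaSupport, ← Finset.coe_max' hx, ← Finset.coe_min' hx, WithBot.unbotD_coe,
    WithTop.untopD_coe]

lemma sigmaSupport_nonempty {x : D} (hx : x ≠ 0) : (sigmaSupport B x).Nonempty := by
  simpa [sigmaSupport] using hx

lemma sigmaDeg_le {x : D} (hx : x ≠ 0) {a b : ℤ} (h : sigmaSupport B x ⊆ Finset.Icc a b) :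
    sigmaDeg B x ≤ b - a := by
  have hne := sigmaSupport_nonempty B hx
  rw [sigmaDeg_eq B hne]
  have := Finset.mem_Icc.mp (h (Finset.max'_mem _ hne))
  have := Finset.mem_Icc.mp (h (Finset.min'_mem _ hne))
  omega

lemma exists_sigmaDeg_eq {x : D} (hx : x ≠ 0) : ∃ m M : ℤ,
    sigmaSupport B x ⊆ Finset.Icc m M ∧ sigmaCoeff B m x ≠ 0 ∧ sigmaCoeff B M x ≠ 0 ∧
      sigmaDeg B x = M - m := by
  have hne := sigmaSupport_nonempty B hx
  refine ⟨_, _, fun j hj => Finset.mem_Icc.mpr ⟨Finset.min'_le _ _ hj, Finset.le_max' _ _ hj⟩,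
    (mem_sigmaSupport B).mp (Finset.min'_mem _ hne),
    (mem_sigmaSupport B).mp (Finset.max'_mem _ hne),
    sigmaDeg_eq B hne⟩

variable {B} (hB : ∀ p : ℤ × ℤ, B p = ((zd ^ p.1 : Dˣ) : D) * ((σd ^ p.2 : Dˣ) : D))
include hB

lemma sigmaCoeff_evalUnit_mul_zpow (g : ℂ[T;T⁻¹]) (k j : ℤ) :
    sigmaCoeff B j (evalUnit zd g * (σd ^ k : Dˣ)) = if k = j then g else 0 := by
  induction g using LaurentPolynomial.induction_on' with
  | add f g hf hg => split_ifs at hf hg ⊢ <;> simp_all [add_mul]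
  | C_mul_T n r =>
    rw [_root_.map_mul (evalUnit zd), evalUnit_C, evalUnit_T, mul_assoc, ← hB (n, k),
      ← Algebra.smul_def]
    ext p
    rw [coeff_sigmaCoeff, map_smul, B.repr_self]
    by_cases hkj : k = j <;> simp [hkj, Finsupp.single_apply, ← single_eq_C_mul_T, eq_comm]

lemma sigmaCoeff_sum {ι : Type*} (s : Finset ι) (g : ι → ℂ[T;T⁻¹]) (h : ι → ℤ) (j : ℤ) :
    sigmaCoeff B j (∑ i ∈ s, evalUnit zd (g i) * (σd ^ h i : Dˣ)) =
      ∑ i ∈ s, if h i = j then g i else 0 := by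
  simp only [map_sum, sigmaCoeff_evalUnit_mul_zpow hB]

lemma sum_evalUnit_sigmaCoeff_mul_zpow {x : D} {s : Finset ℤ} (hs : sigmaSupport B x ⊆ s) :
    ∑ j ∈ s, evalUnit zd (sigmaCoeff B j x) * (σd ^ j : Dˣ) = x := by
  refine ext_sigmaCoeff B fun k => ?_
  rw [sigmaCoeff_sum hB, Finset.sum_ite_eq']
  split_ifs with hk
  · rfl
  · by_contra h
    exact hk (hs ((mem_sigmaSupport B).mpr (Ne.symm h)))

end Coordinates

section Quotient

/-- `A_q/I` as a module over `A = ℂ[T;T⁻¹]`, with `T` acting by left multiplication by `zd`. -/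
def AQuot (_zd : Dˣ) (I : Submodule D D) : Type _ := D ⧸ I

variable (zd) (I : Submodule D D)

instance : AddCommGroup (AQuot zd I) := inferInstanceAs (AddCommGroup (D ⧸ I))

instance : Module ℂ[T;T⁻¹] (AQuot zd I) :=
  Module.compHom (D ⧸ I) (evalUnit zd : ℂ[T;T⁻¹] →ₐ[ℂ] D).toRingHom

def AQuot.mk : D →+ AQuot zd I := I.mkQ.toAddMonoidHom

variable {zd I}

lemma AQuot.smul_mk (g : ℂ[T;T⁻¹]) (d : D) :
    g • AQuot.mk zd I d = AQuot.mk zd I (evalUnit zd g * d) := rfl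

omit [Algebra ℂ D] in
lemma AQuot.mk_eq_zero {d : D} : AQuot.mk zd I d = 0 ↔ d ∈ I :=
  Submodule.Quotient.mk_eq_zero I

lemma aIndep_iff_linearIndependent {k : ℕ} (v : Fin k → D ⧸ I) :
    AIndep zd I v ↔ LinearIndependent (M := AQuot zd I) ℂ[T;T⁻¹] v := by
  simp only [AIndep, embA_eq_evalUnit]
  exact (Fintype.linearIndependent_iff (M := AQuot zd I) (v := v)).symm

end Quotient

theorem aIndep_mk_zpow {B : Module.Basis (ℤ × ℤ) ℂ D}
    (hB : ∀ p : ℤ × ℤ, B p = ((zd ^ p.1 : Dˣ) : D) * ((σd ^ p.2 : Dˣ) : D))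
    {I : Submodule D D} {r : ℕ} (hmin : ∀ x ∈ I, x ≠ 0 → r ≤ (sigmaDeg B x).toNat) (m : ℤ) :
    AIndep zd I (fun i : Fin r => Submodule.Quotient.mk ((σd ^ (m + i) : Dˣ) : D)) := by
  intro g hg i₀
  by_contra hgi
  set x := ∑ i : Fin r, evalUnit zd (g i) * ((σd ^ (m + i) : Dˣ) : D)
  have hxI : x ∈ I := by
    rw [← Submodule.Quotient.mk_eq_zero, ← hg, ← Submodule.mkQ_apply, map_sum]
    simp only [← smul_eq_mul, map_smul, Submodule.mkQ_apply, embA_eq_evalUnit]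
  have hcoeff (j : ℤ) : sigmaCoeff B j x = ∑ i : Fin r, if m + (i : ℤ) = j then g i else 0 :=
    sigmaCoeff_sum hB _ _ _ j
  have hx0 : x ≠ 0 := by
    intro h
    apply hgi
    simpa [h, Fin.val_inj] using (hcoeff (m + i₀)).symm
  have hsupp : sigmaSupport B x ⊆ Finset.Icc m (m + r - 1) := by
    intro j hj
    obtain ⟨i, hij⟩ : ∃ i : Fin r, m + (i : ℤ) = j := by
      by_contra! hne
      exact (mem_sigmaSupport B).mp hj
        ((hcoeff j).trans (Finset.sum_eq_zero fun i _ => if_neg (hne i)))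
    have := i.isLt
    rw [Finset.mem_Icc]
    omega
  have := hmin x hxI hx0
  have := sigmaDeg_le B hx0 hsupp
  have := i₀.isLt
  omega

section Torsion

open Submodule

variable {B : Module.Basis (ℤ × ℤ) ℂ D} {I : Submodule D D}
  (hrel : (σd : D) * zd = (Q : ℂ) • (zd * σd : D))
  (hB : ∀ p : ℤ × ℤ, B p = ((zd ^ p.1 : Dˣ) : D) * ((σd ^ p.2 : Dˣ) : D))

include hB in
lemma mk_mem_of_forall_zpow_mem (P : Submodule ℂ[T;T⁻¹] (AQuot zd I))
    (h : ∀ j : ℤ, AQuot.mk zd I (σd ^ j : Dˣ) ∈ P) (d : D) : AQuot.mk zd I d ∈ P := by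
  rw [← B.linearCombination_repr d, Finsupp.linearCombination_apply, Finsupp.sum, map_sum]
  refine P.sum_mem fun p _ => ?_
  have : AQuot.mk zd I (B.repr d p • B p) =
      (C (B.repr d p) * T p.1) • AQuot.mk zd I (σd ^ p.2 : Dˣ) := by
    rw [AQuot.smul_mk, _root_.map_mul (evalUnit zd), evalUnit_C, evalUnit_T, mul_assoc, ← hB,
      Algebra.smul_def]
  rw [this]
  exact P.smul_mem _ (h _)

include hrel hB in
lemma twist_smul_mk_zpow_mem_span {w : D} (hwI : w ∈ I) {s : Finset ℤ}
    (hs : sigmaSupport B w ⊆ s) (b : ℤ) {e : ℤ} (he : e ∈ s) :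
    twist (Q ^ b) (sigmaCoeff B e w) • AQuot.mk zd I (σd ^ (b + e) : Dˣ) ∈
      span ℂ[T;T⁻¹] ((fun i => AQuot.mk zd I (σd ^ (b + i) : Dˣ)) '' (s.erase e)) := by
  have hsum :
      ∑ i ∈ s, twist (Q ^ b) (sigmaCoeff B i w) • AQuot.mk zd I (σd ^ (b + i) : Dˣ) = 0 := by
    have : ((σd ^ b : Dˣ) : D) * w ∈ I := I.smul_mem _ hwI
    rw [← sum_evalUnit_sigmaCoeff_mul_zpow hB hs, Finset.mul_sum] at this
    rw [← AQuot.mk_eq_zero.mpr this, map_sum]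
    refine Finset.sum_congr rfl fun i _ => ?_
    rw [AQuot.smul_mk, ← mul_assoc, zpow_mul_evalUnit hrel, mul_assoc, ← Units.val_mul, ← zpow_add]
  rw [← Finset.add_sum_erase s _ he, add_eq_zero_iff_eq_neg] at hsum
  rw [hsum]
  exact neg_mem (sum_mem fun i hi => smul_mem _ _ (subset_span ⟨i, hi, rfl⟩))

include hrel hB in
lemma mk_zpow_mem_of_saturated (P : Submodule ℂ[T;T⁻¹] (AQuot zd I))
    (hP : ∀ u : ℂ[T;T⁻¹], u ≠ 0 → ∀ x, u • x ∈ P → x ∈ P)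
    {w : D} (hwI : w ∈ I) {m M : ℤ} (hsupp : sigmaSupport B w ⊆ Finset.Icc m M)
    (hm : sigmaCoeff B m w ≠ 0) (hM : sigmaCoeff B M w ≠ 0)
    (hbase : ∀ j ∈ Finset.Ico m M, AQuot.mk zd I (σd ^ j : Dˣ) ∈ P) (j : ℤ) :
    AQuot.mk zd I (σd ^ j : Dˣ) ∈ P := by
  have hmM : m ≤ M := (Finset.mem_Icc.mp (hsupp ((mem_sigmaSupport B).mpr hm))).2
  have step (b e : ℤ) (he : e ∈ Finset.Icc m M) (hne : sigmaCoeff B e w ≠ 0)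
      (hrest : ∀ i ∈ (Finset.Icc m M).erase e, AQuot.mk zd I (σd ^ (b + i) : Dˣ) ∈ P) :
      AQuot.mk zd I (σd ^ (b + e) : Dˣ) ∈ P :=
    hP _ ((map_ne_zero_iff _ (twist_injective _)).mpr hne) _
      (span_le.mpr (by rintro _ ⟨i, hi, rfl⟩; exact hrest i hi)
        (twist_smul_mk_zpow_mem_span hrel hB hwI hsupp b he))
  have grow (n : ℕ) : ∀ j ∈ Finset.Ico (m - n) (M + n), AQuot.mk zd I (σd ^ j : Dˣ) ∈ P := by
    induction n with
    | zero => simpa using hbase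
    | succ n ih =>
      intro j hj
      by_cases hin : j ∈ Finset.Ico (m - n) (M + n)
      · exact ih j hin
      simp only [Finset.mem_Ico, Nat.cast_succ] at hj hin
      rcases (show j = n + M ∨ j = -(n + 1) + m by omega) with rfl | rfl
      · refine step n M (Finset.right_mem_Icc.mpr hmM) hM fun i hi => ih _ ?_
        simp only [Finset.mem_erase, Finset.mem_Icc, Finset.mem_Ico] at hi ⊢
        omega
      · refine step _ m (Finset.left_mem_Icc.mpr hmM) hm fun i hi => ih _ ?_
        simp only [Finset.mem_erase, Finset.mem_Icc, Finset.mem_Ico] at hi ⊢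
        omega
  exact grow ((j - m).natAbs + (j - M).natAbs + 1) j (by rw [Finset.mem_Ico]; omega)

include hrel hB in
theorem isTorsion_quotient_span_zpow {w : D} (hwI : w ∈ I) {m M : ℤ}
    (hsupp : sigmaSupport B w ⊆ Finset.Icc m M) (hm : sigmaCoeff B m w ≠ 0)
    (hM : sigmaCoeff B M w ≠ 0) :
    Module.IsTorsion ℂ[T;T⁻¹] (AQuot zd I ⧸
      span ℂ[T;T⁻¹] ((fun j : ℤ => AQuot.mk zd I (σd ^ j : Dˣ)) '' Finset.Ico m M)) := by
  set N := span ℂ[T;T⁻¹] ((fun j : ℤ => AQuot.mk zd I (σd ^ j : Dˣ)) '' Finset.Ico m M)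
  set P := (torsion ℂ[T;T⁻¹] (AQuot zd I ⧸ N)).comap N.mkQ
  have hP (u : ℂ[T;T⁻¹]) (hu : u ≠ 0) (x : AQuot zd I) (hx : u • x ∈ P) : x ∈ P :=
    mem_torsion_of_smul_mem_torsion hu (by simpa [P] using hx)
  have hbase (j : ℤ) (hj : j ∈ Finset.Ico m M) : AQuot.mk zd I (σd ^ j : Dˣ) ∈ P := by
    simp [P, (Quotient.mk_eq_zero N).mpr (subset_span ⟨j, hj, rfl⟩)]
  intro x
  obtain ⟨x, rfl⟩ := N.mkQ_surjective x
  obtain ⟨d, rfl⟩ := Submodule.Quotient.mk_surjective I x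
  exact (mem_torsion_iff _).mp <| mk_mem_of_forall_zpow_mem hB P
    (mk_zpow_mem_of_saturated hrel hB P hP hwI hsupp hm hM hbase) d

end Torsion

end QuantumTorus

open QuantumTorus in
theorem stmt_6_general (q : ℂ)
    (D : Type*) [Ring D] [Algebra ℂ D] (zd σd : Dˣ)
    (hrel : (σd : D) * (zd : D) = q • ((zd : D) * (σd : D)))
    (B : Module.Basis (ℤ × ℤ) ℂ D)
    (hB : ∀ p : ℤ × ℤ, B p = ((zd ^ p.1 : Dˣ) : D) * ((σd ^ p.2 : Dˣ) : D))
    (I : Submodule D D) (hI : I ≠ ⊥) :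
    (∃ v : Fin (sInf {n : ℕ | ∃ w ∈ I, w ≠ 0 ∧ (sigmaDeg B w).toNat = n}) → D ⧸ I,
      AIndep zd I v) ∧
    ∀ v : Fin (sInf {n : ℕ | ∃ w ∈ I, w ≠ 0 ∧ (sigmaDeg B w).toNat = n} + 1) → D ⧸ I,
      ¬ AIndep zd I v := by
  have : Nontrivial D := nontrivial_of_ne (B (0, 0)) 0 (B.ne_zero _)
  have hq : q ≠ 0 := by
    rintro rfl
    exact (σd * zd).ne_zero (by rw [Units.val_mul, hrel, zero_smul])
  set r := sInf {n : ℕ | ∃ w ∈ I, w ≠ 0 ∧ (sigmaDeg B w).toNat = n}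
  obtain ⟨w, hwI, hw0, hwr⟩ : r ∈ {n : ℕ | ∃ w ∈ I, w ≠ 0 ∧ (sigmaDeg B w).toNat = n} :=
    Nat.sInf_mem <| let ⟨x, hx, hx0⟩ := I.ne_bot_iff.mp hI; ⟨_, x, hx, hx0, rfl⟩
  have hmin (x : D) (hx : x ∈ I) (hx0 : x ≠ 0) : r ≤ (sigmaDeg B x).toNat :=
    Nat.sInf_le ⟨x, hx, hx0, rfl⟩
  obtain ⟨m, M, hsupp, hm, hM, hdeg⟩ := exists_sigmaDeg_eq B hw0
  refine ⟨⟨_, aIndep_mk_zpow hB hmin m⟩, fun v hv => ?_⟩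
  have hrank := rank_le_card_of_isTorsion_quotient_span _ _
    (isTorsion_quotient_span_zpow (Q := Units.mk0 q hq) hrel hB hwI hsupp hm hM)
  have := ((aIndep_iff_linearIndependent v).mp hv).cardinal_lift_le_rank.trans
    (Cardinal.lift_le.mpr hrank)
  simp only [Cardinal.mk_fintype, Fintype.card_fin, Int.card_Ico, Cardinal.lift_natCast,
    Nat.cast_le] at this
  omega

/-- Let `q ∈ ℂ*` not be a root of unity, let `I ⊆ A_q` be a nonzero left
ideal of the quantum torus and `M = A_q/I`.  Then the rank of `M` as a module over
`A = ℂ[z,z⁻¹]` equals the minimum `r` of `deg_σ(w)` over nonzero `w ∈ I`: there is an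
`A`-linearly independent family in `M` of size `r` but none of size `r + 1`.
In particular `rk_A(M)` is finite. -/
theorem stmt_6 (q : ℂ) (hq : ∀ n : ℤ, n ≠ 0 → q ^ n ≠ 1)
    (D : Type*) [Ring D] [Algebra ℂ D] (zd σd : Dˣ)
    (hrel : (σd : D) * (zd : D) = q • ((zd : D) * (σd : D)))
    (B : Module.Basis (ℤ × ℤ) ℂ D)
    (hB : ∀ p : ℤ × ℤ, B p = ((zd ^ p.1 : Dˣ) : D) * ((σd ^ p.2 : Dˣ) : D))
    (I : Submodule D D) (hI : I ≠ ⊥) :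
    (∃ v : Fin (sInf {n : ℕ | ∃ w ∈ I, w ≠ 0 ∧ (sigmaDeg B w).toNat = n}) → D ⧸ I,
      AIndep zd I v) ∧
    ∀ v : Fin (sInf {n : ℕ | ∃ w ∈ I, w ≠ 0 ∧ (sigmaDeg B w).toNat = n} + 1) → D ⧸ I,
      ¬ AIndep zd I v :=
  stmt_6_general q D zd σd hrel B hB I hI
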